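/- Let G = (V,E) be a finite connected simple graph with m edges. Then Tetali's formula holds: for all i, j ∈ V, h(i,j) = m·R(i,j) + (1/2)∑_{u∈V} deg(u)·(R(j,u) - R(u,i)), where h is the hitting time of the simple random walk and R the effective resistance with unit conductances. -/

import Mathlib

/-- `θ` is a unit flow from `u` to `v` on the graph `G`. -/
def IsUnitFlow {V : Type*} [Fintype V] (G : SimpleGraph V) (u v : V) (θ : V → V → ℝ) : Prop :=
  (∀ x y, θ x y = -θ y x) ∧
  (∀ x y, ¬ G.Adj x y → θ x y = 0) ∧
  (∀ x, x ≠ u → x ≠ v → ∑ y, θ x y = 0) ∧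
  (∑ y, θ u y = 1)

/-- The energy dissipated by a flow with unit resistances. -/
noncomputable def flowEnergy {V : Type*} [Fintype V] (θ : V → V → ℝ) : ℝ :=
  (1 / 2) * ∑ x, ∑ y, (θ x y) ^ 2

/-- The effective resistance between `u` and `v` with unit resistances. -/
noncomputable def effRes {V : Type*} [Fintype V] (G : SimpleGraph V) (u v : V) : ℝ :=
  sInf {E | ∃ θ, IsUnitFlow G u v θ ∧ flowEnergy θ = E}

/-- `H i j` is the expected hitting time of `j` from `i` for the simple random walk. -/
def IsHittingTime {V : Type*} [Fintype V] (G : SimpleGraph V) [DecidableRel G.Adj]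
    (H : V → V → ℝ) : Prop :=
  (∀ j, H j j = 0) ∧
  ∀ i j, i ≠ j → H i j = 1 + (∑ y ∈ G.neighborFinset i, H y j) / (G.degree i : ℝ)

/-!
Fix `j` and let `L` be the Laplacian of `G`. The first-step equations say that `h = H(·, j)`
satisfies `L h = ∑ᵤ deg u • (𝟙ᵤ - 𝟙ⱼ)`, so, `G` being connected,
`h i - h j = ∑ᵤ deg u (ψᵤ i - ψᵤ j)` where `L ψᵤ = 𝟙ᵤ - 𝟙ⱼ`. By Thomson's principle the unit flow of least energy from `a` to `b` is the
gradient of a voltage `φ` with `L φ = 𝟙ₐ - 𝟙_b`, so `R(a, b) = φ a - φ b`. Combined with the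
reciprocity of voltages, which is the symmetry of `L`, this gives
`2 (ψᵤ i - ψᵤ j) = R(u, j) + R(i, j) - R(u, i)`, and `∑ᵤ deg u = 2m` finishes the computation.
-/

open Finset Matrix

namespace SimpleGraph

variable {V : Type*} [Fintype V] [DecidableEq V] {G : SimpleGraph V} [DecidableRel G.Adj]

theorem dotProduct_lapMatrix_mulVec_comm (f g : V → ℝ) :
    f ⬝ᵥ G.lapMatrix ℝ *ᵥ g = g ⬝ᵥ G.lapMatrix ℝ *ᵥ f := by
  rw [dotProduct_mulVec, ← mulVec_transpose, (isSymm_lapMatrix ℝ G).eq, dotProduct_comm]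

theorem sum_lapMatrix_mulVec (f : V → ℝ) : ∑ x, (G.lapMatrix ℝ *ᵥ f) x = 0 := by
  simpa [lapMatrix_mulVec_const_eq_zero, dotProduct] using
    dotProduct_lapMatrix_mulVec_comm (G := G) (fun _ ↦ 1) f

theorem Connected.sub_eq_sub_of_lapMatrix_mulVec_eq (hG : G.Connected) {f g : V → ℝ}
    (h : G.lapMatrix ℝ *ᵥ f = G.lapMatrix ℝ *ᵥ g) (x y : V) : f x - f y = g x - g y := by
  have hker : G.lapMatrix ℝ *ᵥ (f - g) = 0 := by rw [mulVec_sub, h, sub_self]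
  have := (lapMatrix_mulVec_eq_zero_iff_forall_reachable G).mp hker x y (hG.preconnected x y)
  simp only [Pi.sub_apply] at this
  linarith

/-- The range of `L` lies in the hyperplane `∑ x, g x = 0`, and has the same dimension since
`ker L` consists of the constants. -/
theorem Connected.exists_lapMatrix_mulVec_eq (hG : G.Connected) {g : V → ℝ}
    (hg : ∑ x, g x = 0) : ∃ f, G.lapMatrix ℝ *ᵥ f = g := by
  set sumDual := dotProductEquiv ℝ V (fun _ ↦ 1)
  have hsum : sumDual ≠ 0 := by
    obtain ⟨x⟩ := hG.nonempty
    intro h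
    simpa [sumDual] using LinearMap.congr_fun h (Pi.single x 1)
  have hrange : LinearMap.range (G.lapMatrix ℝ).toLin' ≤ LinearMap.ker sumDual := by
    rintro _ ⟨f, rfl⟩
    simpa [sumDual, dotProduct] using sum_lapMatrix_mulVec (G := G) f
  have hker : Module.finrank ℝ (LinearMap.ker (G.lapMatrix ℝ).toLin') = 1 := by
    have := hG.preconnected.subsingleton_connectedComponent
    rw [← card_connectedComponent_eq_finrank_ker_toLin'_lapMatrix]
    exact Fintype.card_eq_one_iff.mpr
      ⟨G.connectedComponentMk hG.nonempty.some, fun _ ↦ Subsingleton.elim _ _⟩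
  have heq := Submodule.eq_of_le_of_finrank_le hrange (by
    have h1 := LinearMap.finrank_range_add_finrank_ker (G.lapMatrix ℝ).toLin'
    have h2 := sumDual.finrank_ker_add_one_of_ne_zero hsum
    omega)
  obtain ⟨f, hf⟩ := heq ▸ (show g ∈ LinearMap.ker sumDual by simpa [sumDual, dotProduct] using hg)
  exact ⟨f, hf⟩

end SimpleGraph

section Flow

variable {V : Type*} [Fintype V] {G : SimpleGraph V} {u v : V} {θ : V → V → ℝ}

theorem sum_sum_mul_sub_of_antisymm (hθ : ∀ x y, θ x y = -θ y x) (φ : V → ℝ) :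
    ∑ x, ∑ y, θ x y * (φ x - φ y) = 2 * ∑ x, φ x * ∑ y, θ x y := by
  have hswap : ∑ x, ∑ y, θ x y * φ y = -∑ x, ∑ y, θ x y * φ x := by
    rw [sum_comm, ← sum_neg_distrib]
    refine sum_congr rfl fun x _ ↦ ?_
    rw [← sum_neg_distrib]
    refine sum_congr rfl fun y _ ↦ ?_
    rw [hθ, neg_mul]
  have hsource : ∑ x, φ x * ∑ y, θ x y = ∑ x, ∑ y, θ x y * φ x := by
    simp only [mul_sum, mul_comm]
  rw [hsource]
  simp only [mul_sub, sum_sub_distrib, hswap]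
  ring

theorem sum_sum_eq_zero_of_antisymm (hθ : ∀ x y, θ x y = -θ y x) : ∑ x, ∑ y, θ x y = 0 := by
  simpa using sum_sum_mul_sub_of_antisymm hθ fun _ ↦ 1

theorem IsUnitFlow.sum_mul_sum (hθ : IsUnitFlow G u v θ) (huv : u ≠ v) (φ : V → ℝ) :
    ∑ x, φ x * ∑ y, θ x y = φ u - φ v := by
  classical
  have hsupp (ψ : V → ℝ) : ∑ x, ψ x * ∑ y, θ x y = ψ u + ψ v * ∑ y, θ v y := by
    rw [← sum_subset (subset_univ {u, v}), sum_pair huv, hθ.2.2.2, mul_one]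
    intro x _ hx
    simp only [mem_insert, mem_singleton, not_or] at hx
    rw [hθ.2.2.1 x hx.1 hx.2, mul_zero]
  have hsink : ∑ y, θ v y = -1 := by
    have htotal := hsupp fun _ ↦ 1
    simp only [one_mul, sum_sum_eq_zero_of_antisymm hθ.1] at htotal
    linarith
  rw [hsupp, hsink]
  ring

theorem IsUnitFlow.sum_sum_mul_sub (hθ : IsUnitFlow G u v θ) (huv : u ≠ v) (φ : V → ℝ) :
    ∑ x, ∑ y, θ x y * (φ x - φ y) = 2 * (φ u - φ v) := by
  rw [sum_sum_mul_sub_of_antisymm hθ.1, hθ.sum_mul_sum huv]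

/-- There is no unit flow from `u` to itself, so this is `sInf ∅ = 0`. -/
theorem effRes_self (G : SimpleGraph V) (u : V) : effRes G u u = 0 := by
  have hnoflow : {E | ∃ θ, IsUnitFlow G u u θ ∧ flowEnergy θ = E} = ∅ := by
    refine Set.eq_empty_of_forall_notMem ?_
    rintro _ ⟨θ, hθ, -⟩
    have htotal := sum_sum_eq_zero_of_antisymm hθ.1
    rw [sum_eq_single u (fun x _ hx ↦ hθ.2.2.1 x hx hx) (by simp), hθ.2.2.2] at htotal
    exact one_ne_zero htotal
  rw [effRes, hnoflow, Real.sInf_empty]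

end Flow

namespace SimpleGraph

def gradientFlow {V : Type*} (G : SimpleGraph V) [DecidableRel G.Adj] (φ : V → ℝ) (x y : V) : ℝ :=
  if G.Adj x y then φ x - φ y else 0

def IsVoltage {V : Type*} [Fintype V] [DecidableEq V] (G : SimpleGraph V) [DecidableRel G.Adj]
    (a b : V) (φ : V → ℝ) : Prop :=
  G.lapMatrix ℝ *ᵥ φ = Pi.single a 1 - Pi.single b 1

variable {V : Type*} [Fintype V] {G : SimpleGraph V} {u v : V}

theorem _root_.IsUnitFlow.sum_sum_mul_gradientFlow [DecidableRel G.Adj] {θ : V → V → ℝ}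
    (hθ : IsUnitFlow G u v θ) (huv : u ≠ v) (φ : V → ℝ) :
    ∑ x, ∑ y, θ x y * G.gradientFlow φ x y = 2 * (φ u - φ v) := by
  rw [← hθ.sum_sum_mul_sub huv φ]
  refine sum_congr rfl fun x _ ↦ sum_congr rfl fun y _ ↦ ?_
  by_cases h : G.Adj x y
  · rw [gradientFlow, if_pos h]
  · rw [hθ.2.1 x y h, zero_mul, zero_mul]

variable [DecidableEq V] [DecidableRel G.Adj] {φ : V → ℝ}

theorem sum_gradientFlow (φ : V → ℝ) (x : V) :
    ∑ y, G.gradientFlow φ x y = (G.lapMatrix ℝ *ᵥ φ) x := by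
  rw [lapMatrix_mulVec_apply, ← card_neighborFinset_eq_degree, ← nsmul_eq_mul, ← sum_const,
    ← sum_sub_distrib, neighborFinset_eq_filter, sum_filter]
  rfl

theorem Connected.exists_isVoltage (hG : G.Connected) (a b : V) : ∃ φ, G.IsVoltage a b φ :=
  hG.exists_lapMatrix_mulVec_eq (by simp [sum_sub_distrib])

theorem IsVoltage.neg (hφ : G.IsVoltage u v φ) : G.IsVoltage v u (-φ) := by
  rw [IsVoltage, mulVec_neg, hφ, neg_sub]

theorem IsVoltage.sub {w : V} {ψ : V → ℝ} (hφ : G.IsVoltage u w φ) (hψ : G.IsVoltage v w ψ) :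
    G.IsVoltage u v (φ - ψ) := by
  rw [IsVoltage, mulVec_sub, hφ, hψ, sub_sub_sub_cancel_right]

theorem IsVoltage.sub_eq_sub {a b : V} {ψ : V → ℝ} (hφ : G.IsVoltage u v φ)
    (hψ : G.IsVoltage a b ψ) : φ a - φ b = ψ u - ψ v := by
  rw [IsVoltage] at hφ hψ
  simpa [dotProduct_sub, hφ, hψ] using dotProduct_lapMatrix_mulVec_comm (G := G) φ ψ

theorem IsVoltage.isUnitFlow_gradientFlow (hφ : G.IsVoltage u v φ) (huv : u ≠ v) :
    IsUnitFlow G u v (G.gradientFlow φ) := by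
  refine ⟨fun x y ↦ ?_, fun x y h ↦ if_neg h, fun x hxu hxv ↦ ?_, ?_⟩
  · by_cases h : G.Adj x y
    · simp [gradientFlow, h, h.symm]
    · simp [gradientFlow, h, G.adj_comm y x]
  · rw [sum_gradientFlow, hφ]
    simp [hxu, hxv]
  · rw [sum_gradientFlow, hφ]
    simp [huv]

/-- Thomson's principle: `θ - ∇φ` is orthogonal to `∇φ` for every unit flow `θ`, since both
pair with `∇φ` to `2 (φ u - φ v)`. -/
theorem IsVoltage.isLeast_flowEnergy (hφ : G.IsVoltage u v φ) (huv : u ≠ v) :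
    IsLeast {E | ∃ θ, IsUnitFlow G u v θ ∧ flowEnergy θ = E} (φ u - φ v) := by
  have hgrad := hφ.isUnitFlow_gradientFlow huv
  have hgradSq : ∑ x, ∑ y, G.gradientFlow φ x y ^ 2 = 2 * (φ u - φ v) := by
    simpa only [sq] using hgrad.sum_sum_mul_gradientFlow huv φ
  refine ⟨⟨_, hgrad, by rw [flowEnergy, hgradSq]; ring⟩, ?_⟩
  rintro _ ⟨θ, hθ, rfl⟩
  have hcross := hθ.sum_sum_mul_gradientFlow huv φ
  have hdiffSq : ∑ x, ∑ y, (θ x y - G.gradientFlow φ x y) ^ 2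
      = ∑ x, ∑ y, θ x y ^ 2 - 2 * ∑ x, ∑ y, θ x y * G.gradientFlow φ x y
        + ∑ x, ∑ y, G.gradientFlow φ x y ^ 2 := by
    simp only [sub_sq, sum_add_distrib, sum_sub_distrib, mul_sum, mul_assoc]
  have hnonneg : 0 ≤ ∑ x, ∑ y, (θ x y - G.gradientFlow φ x y) ^ 2 := by positivity
  rw [flowEnergy]
  linarith

theorem IsVoltage.effRes_eq (hφ : G.IsVoltage u v φ) : effRes G u v = φ u - φ v := by
  rcases eq_or_ne u v with rfl | huv
  · rw [effRes_self, sub_self]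
  · exact (hφ.isLeast_flowEnergy huv).csInf_eq

theorem Connected.effRes_comm (hG : G.Connected) (u v : V) : effRes G u v = effRes G v u := by
  obtain ⟨φ, hφ⟩ := hG.exists_isVoltage u v
  rw [hφ.effRes_eq, hφ.neg.effRes_eq, Pi.neg_apply, Pi.neg_apply, neg_sub_neg]

theorem IsVoltage.two_mul_sub_eq_effRes {i j : V} {ψ : V → ℝ} (hφ : G.IsVoltage u j φ)
    (hψ : G.IsVoltage i j ψ) : 2 * (φ i - φ j) = effRes G u j + effRes G i j - effRes G u i := by
  rw [hφ.effRes_eq, hψ.effRes_eq, (hφ.sub hψ).effRes_eq, Pi.sub_apply, Pi.sub_apply]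
  linarith [hψ.sub_eq_sub hφ]

/-- Off `j` this is the first-step equation; at `j` it follows since both sides sum to zero. -/
theorem _root_.IsHittingTime.lapMatrix_mulVec {H : V → V → ℝ} (hH : IsHittingTime G H)
    (hG : G.Connected) (j : V) :
    G.lapMatrix ℝ *ᵥ (fun x ↦ H x j) = ∑ u, (G.degree u : ℝ) • (Pi.single u 1 - Pi.single j 1) := by
  rw [← sub_eq_zero]
  set e := G.lapMatrix ℝ *ᵥ (fun x ↦ H x j)
    - ∑ u, (G.degree u : ℝ) • (Pi.single u 1 - Pi.single j 1)
  have hoff : ∀ x ≠ j, e x = 0 := by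
    intro x hx
    have : Nontrivial V := ⟨⟨x, j, hx⟩⟩
    have hdeg : (G.degree x : ℝ) ≠ 0 := by
      exact_mod_cast ((G.degree_pos_iff_exists_adj x).mpr
        (hG.preconnected.exists_adj_of_nontrivial x)).ne'
    have hlap : (G.lapMatrix ℝ *ᵥ fun x ↦ H x j) x = G.degree x := by
      rw [lapMatrix_mulVec_apply, hH.2 x j hx]
      field_simp
      ring
    simp [e, hlap, Finset.sum_apply, Pi.single_apply, hx]
  have hsum : ∑ x, e x = 0 := by
    simp only [e, Pi.sub_apply, sum_sub_distrib, sum_lapMatrix_mulVec, Finset.sum_apply]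
    rw [sum_comm]
    simp only [Pi.sub_apply, Pi.smul_apply, smul_eq_mul, ← mul_sum, sum_sub_distrib, sum_pi_single',
      mem_univ, if_true, sub_self, mul_zero, sum_const_zero]
  rw [sum_eq_single j (fun x _ hx ↦ hoff x hx) (by simp)] at hsum
  funext x
  rcases eq_or_ne x j with rfl | hx
  · exact hsum
  · exact hoff x hx

end SimpleGraph

/-- **Tetali's formula.** For a finite connected simple graph `G` with `m` edges,
`h(i,j) = m·R(i,j) + (1/2) ∑_{u} deg(u) (R(j,u) - R(u,i))` for all vertices `i, j`. -/
theorem tetali_formula {V : Type*} [Fintype V] [DecidableEq V] (G : SimpleGraph V)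
    [DecidableRel G.Adj] (hG : G.Connected) (H : V → V → ℝ) (hH : IsHittingTime G H)
    (i j : V) :
    H i j = (G.edgeFinset.card : ℝ) * effRes G i j
      + (1 / 2) * ∑ u, (G.degree u : ℝ) * (effRes G j u - effRes G u i) := by
  choose ψ hψ using fun u ↦ hG.exists_isVoltage u j
  have hdecomp : H i j - H j j = ∑ u, (G.degree u : ℝ) * (ψ u i - ψ u j) := by
    have hlap : G.lapMatrix ℝ *ᵥ (fun x ↦ H x j)
        = G.lapMatrix ℝ *ᵥ ∑ u, (G.degree u : ℝ) • ψ u := by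
      rw [hH.lapMatrix_mulVec hG, mulVec_sum]
      exact sum_congr rfl fun u _ ↦ by rw [mulVec_smul, show G.lapMatrix ℝ *ᵥ ψ u = _ from hψ u]
    rw [hG.sub_eq_sub_of_lapMatrix_mulVec_eq hlap i j]
    simp [Finset.sum_apply, mul_sub, sum_sub_distrib]
  have hdeg : ∑ u, (G.degree u : ℝ) = 2 * G.edgeFinset.card :=
    mod_cast G.sum_degrees_eq_twice_card_edges
  calc H i j = ∑ u, (G.degree u : ℝ) * (ψ u i - ψ u j) := by rw [← hdecomp, hH.1 j, sub_zero]
    _ = ∑ u, ((1 / 2) * ((G.degree u : ℝ) * (effRes G j u - effRes G u i))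
          + effRes G i j / 2 * G.degree u) := by
      refine sum_congr rfl fun u _ ↦ ?_
      have := (hψ u).two_mul_sub_eq_effRes (hψ i)
      rw [hG.effRes_comm u j] at this
      linear_combination (G.degree u : ℝ) / 2 * this
    _ = _ := by rw [sum_add_distrib, ← mul_sum, ← mul_sum, hdeg]; ring
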